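/- arXiv:0805.3869 — 2 statements merged into one kernel-verified Lean document; each statement's English description precedes it below -/
import Mathlib

section
/- There exist constants C_s > 0, depending only on s and D, and, for each δ with 0 < δ < (β' − α')/2, a constant C_δ > 0, depending only on s, D, δ, V, α', β' (and in particular not on ε, J or v), such that the following holds. Let J ⊂ ℝ be a bounded interval of positive length, ε > 0, and v : J → ℝ measurable. Set A := {x ∈ J : v(x) ≤ α' + δ}, B := {x ∈ J : v(x) ≥ β' − δ}, r_A := |A|/|J|, r_B := |B|/|J|, and assume r_A < 1 and r_B < 1. Then G_ε[v, J] ≥ ε^{1−a} · C_s · (β' − α' − 2δ)² / |J|^{2s−1} · { 1 − (1 − r_A)^{−(2s−1)} − (1 − r_B)^{−(2s−1)} } + C_δ. -/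
open Real MeasureTheory Set
open scoped ENNReal

/-- The Gagliardo-type double integral ∬_{E×E} |v(x') − v(x)|²/|x' − x|^{1+2s} dx' dx. -/
noncomputable def gag (s : ℝ) (E : Set ℝ) (v : ℝ → ℝ) : ℝ≥0∞ :=
  ∫⁻ x in E, ∫⁻ x' in E, ENNReal.ofReal ((v x' - v x) ^ 2 / |x' - x| ^ (1 + 2 * s))

/-- The functional
G_ε[v, E] := (ε^{1−a}/D) ∬_{E×E} |v(x')−v(x)|²/|x'−x|^{1+2s} + ε^{−(1−a)/(−a)} ∫_E V(v). -/
noncomputable def Gfun (a s D : ℝ) (V : ℝ → ℝ) (ε : ℝ) (E : Set ℝ) (v : ℝ → ℝ) : ℝ≥0∞ :=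
  ENNReal.ofReal (ε ^ (1 - a) / D) * gag s E v +
    ENNReal.ofReal (ε ^ (-((1 - a) / (-a)))) * ∫⁻ x in E, ENNReal.ofReal (V (v x))

/-!
Split `J` into `A`, `B` and the transition set `M = J \ (A ∪ B)`, on which `V ∘ v` is bounded
below by some `m > 0`, so the potential term is at least `λ_ε m |M|`. With `c = β' - α' - 2δ`,
the inequality `(1 - r_B)|J| ≤ |A| + |M|` bounds the first term of the claimed lower bound by
`-ε^{1-a} c² (|A| + |M|)^{-(2s-1)}` (and symmetrically in `A`, `B`).

If `|A| ≤ |M|`, this is at most `-ε^{1-a} c² (2|M|)^{-(2s-1)}`, and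
`ε^{1-a} x^{-(2s-1)} + λ_ε x` is bounded below by a constant independent of `ε`: `λ_ε` is
exactly the scaling that makes the two terms balance. Otherwise `|A|, |B| ≥ ℓ ≥ |M|` for a
suitable `ℓ`; comparing the masses of `A` and `B` in windows of radius `3ℓ` (intermediate value
theorem) produces a set of measure `ℓ/2` of points of one of the sets, each seeing mass `ℓ/2` of
the other within distance `6ℓ`, so the Gagliardo term is at least of order `c² ℓ^{-(2s-1)}`.
Choosing `ℓ` between `|M|` and the minimiser above gives the same constant.
-/

open Metric

lemma volume_inter_ball_le_add (A : Set ℝ) (t t' r : ℝ) :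
    volume (A ∩ ball t' r) ≤ volume (A ∩ ball t r) + ENNReal.ofReal (2 * |t' - t|) := by
  have hsub : A ∩ ball t' r ⊆ (A ∩ ball t r) ∪ (uIcc (t + r) (t' + r) ∪ uIcc (t - r) (t' - r)) := by
    rintro z ⟨hzA, hz⟩
    rw [Real.ball_eq_Ioo] at hz ⊢
    by_cases h : z ∈ Ioo (t - r) (t + r)
    · exact Or.inl ⟨hzA, h⟩
    · simp only [mem_Ioo, not_and_or, not_lt] at h
      simp only [mem_union, mem_uIcc]
      obtain ⟨hz1, hz2⟩ := hz
      rcases h with h | h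
      · exact Or.inr (Or.inr (Or.inr ⟨by linarith, by linarith⟩))
      · exact Or.inr (Or.inl (Or.inl ⟨h, by linarith⟩))
  calc volume (A ∩ ball t' r)
      ≤ volume (A ∩ ball t r) + (volume (uIcc (t + r) (t' + r)) + volume (uIcc (t - r) (t' - r))) :=
        (measure_mono hsub).trans
          ((measure_union_le _ _).trans (add_le_add_right (measure_union_le _ _) _))
    _ = volume (A ∩ ball t r) + ENNReal.ofReal (2 * |t' - t|) := by
        rw [Real.volume_interval, Real.volume_interval, ← ENNReal.ofReal_add (abs_nonneg _)
          (abs_nonneg _)]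
        congr 2
        rw [show t' + r - (t + r) = t' - t by ring, show t' - r - (t - r) = t' - t by ring]
        ring

lemma continuous_volume_inter_ball_toReal (A : Set ℝ) (r : ℝ) :
    Continuous fun t ↦ (volume (A ∩ ball t r)).toReal := by
  have hfin : ∀ t, volume (A ∩ ball t r) ≠ ⊤ := fun t ↦
    measure_ne_top_of_subset inter_subset_right measure_ball_lt_top.ne
  refine (LipschitzWith.of_le_add_mul 2 fun t' t ↦ ?_).continuous
  have h := ENNReal.toReal_mono (ENNReal.add_ne_top.2 ⟨hfin t, ENNReal.ofReal_ne_top⟩)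
    (volume_inter_ball_le_add A t t' r)
  rw [ENNReal.toReal_add (hfin t) ENNReal.ofReal_ne_top,
    ENNReal.toReal_ofReal (by positivity)] at h
  simpa [Real.dist_eq] using h

lemma ofReal_le_volume_Ioo_inter_ball {x₀ y₀ t r : ℝ} (ht : t ∈ Icc x₀ y₀)
    (hr : 2 * r ≤ y₀ - x₀) : ENNReal.ofReal r ≤ volume (Ioo x₀ y₀ ∩ ball t r) := by
  have hball : ∀ z, |z - t| < r → z ∈ ball t r := fun z hz ↦ by rwa [mem_ball, Real.dist_eq]
  by_cases hright : t + r ≤ y₀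
  · calc ENNReal.ofReal r = volume (Ioo t (t + r)) := by rw [Real.volume_Ioo, add_sub_cancel_left]
      _ ≤ _ := by
          refine measure_mono fun z ⟨h1, h2⟩ ↦ ⟨⟨?_, ?_⟩, hball z (abs_lt.2 ⟨?_, ?_⟩)⟩ <;>
            linarith [ht.1]
  · calc ENNReal.ofReal r = volume (Ioo (t - r) t) := by rw [Real.volume_Ioo, sub_sub_cancel]
      _ ≤ _ := by
          refine measure_mono fun z ⟨h1, h2⟩ ↦ ⟨⟨?_, ?_⟩, hball z (abs_lt.2 ⟨?_, ?_⟩)⟩ <;>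
            linarith [ht.2]

lemma le_volume_inter_ball_add_volume_inter_ball {A B : Set ℝ} {x₀ y₀ ℓ t : ℝ}
    (hM : volume (Ioo x₀ y₀ \ (A ∪ B)) ≤ ENNReal.ofReal ℓ) (hℓ : 0 ≤ ℓ)
    (hL : 6 * ℓ ≤ y₀ - x₀) (ht : t ∈ Icc x₀ y₀) :
    2 * ℓ ≤ (volume (A ∩ ball t (3 * ℓ))).toReal + (volume (B ∩ ball t (3 * ℓ))).toReal := by
  have hfin : ∀ C : Set ℝ, volume (C ∩ ball t (3 * ℓ)) ≠ ⊤ := fun C ↦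
    measure_ne_top_of_subset inter_subset_right measure_ball_lt_top.ne
  have hsub : Ioo x₀ y₀ ∩ ball t (3 * ℓ) ⊆
      (A ∩ ball t (3 * ℓ) ∪ B ∩ ball t (3 * ℓ)) ∪ Ioo x₀ y₀ \ (A ∪ B) := by
    rintro z ⟨hzJ, hz⟩
    by_cases hA : z ∈ A
    · exact Or.inl (Or.inl ⟨hA, hz⟩)
    by_cases hB : z ∈ B
    · exact Or.inl (Or.inr ⟨hB, hz⟩)
    exact Or.inr ⟨hzJ, by simp [hA, hB]⟩
  have h := (ofReal_le_volume_Ioo_inter_ball ht (by linarith)).trans ((measure_mono hsub).trans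
    ((measure_union_le _ _).trans (add_le_add (measure_union_le _ _) hM)))
  rw [← ENNReal.ofReal_toReal (hfin A), ← ENNReal.ofReal_toReal (hfin B),
    ← ENNReal.ofReal_add ENNReal.toReal_nonneg ENNReal.toReal_nonneg,
    ← ENNReal.ofReal_add (by positivity) hℓ,
    ENNReal.ofReal_le_ofReal_iff (by positivity)] at h
  linarith

lemma IsPreconnected.exists_le_le_or_forall_le {s : Set ℝ} (hs : IsPreconnected s)
    {f g : ℝ → ℝ} (hf : ContinuousOn f s) (hg : ContinuousOn g s) {m : ℝ} (hm : 0 ≤ m)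
    (hfg : ∀ t ∈ s, 4 * m ≤ f t + g t) :
    (∃ t ∈ s, m ≤ f t ∧ m ≤ g t) ∨ (∀ t ∈ s, m ≤ f t) ∨ (∀ t ∈ s, m ≤ g t) := by
  by_contra! h
  obtain ⟨hboth, ⟨t₁, ht₁, hf₁⟩, ⟨t₂, ht₂, hg₂⟩⟩ := h
  have := hfg t₁ ht₁
  have := hfg t₂ ht₂
  obtain ⟨t, ht, hft⟩ := hs.intermediate_value₂ ht₁ ht₂ hf hg (by linarith) (by linarith)
  have := hfg t ht
  linarith [hboth t ht (by linarith)]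

def Interlaced (A B : Set ℝ) (R : ℝ) (η : ℝ≥0∞) : Prop :=
  ∃ S ⊆ B, MeasurableSet S ∧ η ≤ volume S ∧ ∀ x ∈ S, η ≤ volume (A ∩ closedBall x R)

lemma interlaced_or_interlaced {A B : Set ℝ} {x₀ y₀ ℓ : ℝ} (hA : MeasurableSet A)
    (hB : MeasurableSet B) (hAJ : A ⊆ Ioo x₀ y₀) (hBJ : B ⊆ Ioo x₀ y₀) (hℓ : 0 < ℓ)
    (hAℓ : ENNReal.ofReal ℓ ≤ volume A) (hBℓ : ENNReal.ofReal ℓ ≤ volume B)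
    (hM : volume (Ioo x₀ y₀ \ (A ∪ B)) ≤ ENNReal.ofReal ℓ) :
    Interlaced A B (6 * ℓ) (ENNReal.ofReal (ℓ / 2)) ∨
      Interlaced B A (6 * ℓ) (ENNReal.ofReal (ℓ / 2)) := by
  have hhalf : ENNReal.ofReal (ℓ / 2) ≤ ENNReal.ofReal ℓ := ENNReal.ofReal_le_ofReal (by linarith)
  rcases le_or_gt (y₀ - x₀) (6 * ℓ) with hL | hL
  · refine Or.inl ⟨B, subset_rfl, hB, hhalf.trans hBℓ, fun x hx ↦ ?_⟩
    have hAx : A ⊆ A ∩ closedBall x (6 * ℓ) := fun y hy ↦ ⟨hy, by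
      rw [mem_closedBall, Real.dist_eq, abs_le]
      obtain ⟨⟨h1, h2⟩, h3, h4⟩ := And.intro (hAJ hy) (hBJ hx)
      constructor <;> linarith⟩
    exact hhalf.trans (hAℓ.trans (measure_mono hAx))
  have hwin : ∀ {C : Set ℝ} {t : ℝ}, ℓ / 2 ≤ (volume (C ∩ ball t (3 * ℓ))).toReal →
      ENNReal.ofReal (ℓ / 2) ≤ volume (C ∩ ball t (3 * ℓ)) := fun h ↦
    ENNReal.ofReal_le_of_le_toReal h
  have hball : ∀ {C : Set ℝ} {t x : ℝ}, x ∈ ball t (3 * ℓ) →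
      C ∩ ball t (3 * ℓ) ⊆ C ∩ closedBall x (6 * ℓ) := by
    rintro C t x hx y ⟨hy, hyt⟩
    rw [mem_ball] at hx hyt
    exact ⟨hy, by rw [mem_closedBall]; linarith [dist_triangle_right y x t]⟩
  rcases isPreconnected_Icc.exists_le_le_or_forall_le
      (continuous_volume_inter_ball_toReal A (3 * ℓ)).continuousOn
      (continuous_volume_inter_ball_toReal B (3 * ℓ)).continuousOn (by linarith : 0 ≤ ℓ / 2)
      (fun t ht ↦ by linarith [le_volume_inter_ball_add_volume_inter_ball hM hℓ.le hL.le ht])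
    with ⟨t, -, htA, htB⟩ | hallA | hallB
  · exact Or.inl ⟨B ∩ ball t (3 * ℓ), inter_subset_left, hB.inter measurableSet_ball, hwin htB,
      fun x hx ↦ (hwin htA).trans (measure_mono (hball hx.2))⟩
  · exact Or.inl ⟨B, subset_rfl, hB, hhalf.trans hBℓ, fun x hx ↦
      (hwin (hallA x (Ioo_subset_Icc_self (hBJ hx)))).trans
        (measure_mono (hball (mem_ball_self (by linarith))))⟩
  · exact Or.inr ⟨A, subset_rfl, hA, hhalf.trans hAℓ, fun x hx ↦
      (hwin (hallB x (Ioo_subset_Icc_self (hAJ hx)))).trans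
        (measure_mono (hball (mem_ball_self (by linarith))))⟩

lemma ofReal_div_rpow_le {s c R : ℝ} {v : ℝ → ℝ} {x y : ℝ} (hs : 0 < 1 + 2 * s) (hc : 0 < c)
    (hsep : c ≤ |v y - v x|) (hxy : |y - x| ≤ R) :
    ENNReal.ofReal (c ^ 2 / R ^ (1 + 2 * s)) ≤
      ENNReal.ofReal ((v y - v x) ^ 2 / |y - x| ^ (1 + 2 * s)) := by
  have hne : y ≠ x := by
    rintro rfl
    simp only [sub_self, abs_zero] at hsep
    linarith
  have hpos : 0 < |y - x| := abs_pos.2 (sub_ne_zero.2 hne)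
  refine ENNReal.ofReal_le_ofReal (div_le_div₀ (sq_nonneg _) ?_ (by positivity)
    (rpow_le_rpow hpos.le hxy hs.le))
  rw [← sq_abs (v y - v x)]
  exact pow_le_pow_left₀ hc.le hsep 2

lemma le_gag_of_interlaced {s c R : ℝ} {η : ℝ≥0∞} {J A B : Set ℝ} {v : ℝ → ℝ}
    (hs : 0 < 1 + 2 * s) (hc : 0 < c) (hA : MeasurableSet A) (hAJ : A ⊆ J) (hBJ : B ⊆ J)
    (hsep : ∀ x ∈ B, ∀ y ∈ A, c ≤ |v y - v x|) (h : Interlaced A B R η) :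
    ENNReal.ofReal (c ^ 2 / R ^ (1 + 2 * s)) * η * η ≤ gag s J v := by
  obtain ⟨S, hSB, hS, hSη, hSA⟩ := h
  set κ := ENNReal.ofReal (c ^ 2 / R ^ (1 + 2 * s))
  have hinner : ∀ x ∈ S, κ * η ≤
      ∫⁻ y in J, ENNReal.ofReal ((v y - v x) ^ 2 / |y - x| ^ (1 + 2 * s)) := fun x hx ↦
    calc κ * η ≤ κ * volume (A ∩ closedBall x R) := mul_le_mul_right (hSA x hx) κ
      _ = ∫⁻ _ in A ∩ closedBall x R, κ := (setLIntegral_const _ κ).symm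
      _ ≤ ∫⁻ y in A ∩ closedBall x R,
            ENNReal.ofReal ((v y - v x) ^ 2 / |y - x| ^ (1 + 2 * s)) :=
          setLIntegral_mono' (hA.inter measurableSet_closedBall) fun y ⟨hyA, hyx⟩ ↦
            ofReal_div_rpow_le hs hc (hsep x (hSB hx) y hyA)
              (by rwa [mem_closedBall, Real.dist_eq] at hyx)
      _ ≤ _ := lintegral_mono_set (inter_subset_left.trans hAJ)
  calc κ * η * η ≤ κ * η * volume S := mul_le_mul_right hSη _
    _ = ∫⁻ _ in S, κ * η := (setLIntegral_const _ _).symm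
    _ ≤ ∫⁻ x in S, ∫⁻ y in J, ENNReal.ofReal ((v y - v x) ^ 2 / |y - x| ^ (1 + 2 * s)) :=
        setLIntegral_mono' hS hinner
    _ ≤ gag s J v := lintegral_mono_set (hSB.trans hBJ)

lemma le_gag_of_separated {s c ℓ x₀ y₀ : ℝ} {A B : Set ℝ} {v : ℝ → ℝ} (hs : 0 < 1 + 2 * s)
    (hc : 0 < c) (hℓ : 0 < ℓ) (hA : MeasurableSet A) (hB : MeasurableSet B)
    (hAJ : A ⊆ Ioo x₀ y₀) (hBJ : B ⊆ Ioo x₀ y₀) (hsep : ∀ x ∈ B, ∀ y ∈ A, c ≤ |v y - v x|)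
    (hAℓ : ENNReal.ofReal ℓ ≤ volume A) (hBℓ : ENNReal.ofReal ℓ ≤ volume B)
    (hM : volume (Ioo x₀ y₀ \ (A ∪ B)) ≤ ENNReal.ofReal ℓ) :
    ENNReal.ofReal (c ^ 2 / (4 * 6 ^ (1 + 2 * s)) * ℓ ^ (-(2 * s - 1))) ≤ gag s (Ioo x₀ y₀) v := by
  have hconst : c ^ 2 / (4 * 6 ^ (1 + 2 * s)) * ℓ ^ (-(2 * s - 1)) =
      c ^ 2 / (6 * ℓ) ^ (1 + 2 * s) * (ℓ / 2) * (ℓ / 2) := by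
    rw [mul_rpow (by norm_num) hℓ.le, show -(2 * s - 1) = 2 - (1 + 2 * s) by ring,
      rpow_sub hℓ, rpow_two]
    field_simp
    ring
  rw [hconst, ENNReal.ofReal_mul (by positivity), ENNReal.ofReal_mul (by positivity)]
  rcases interlaced_or_interlaced hA hB hAJ hBJ hℓ hAℓ hBℓ hM with h | h
  · exact le_gag_of_interlaced hs hc hA hAJ hBJ hsep h
  · refine le_gag_of_interlaced hs hc hB hBJ hAJ (fun x hx y hy ↦ ?_) h
    rw [abs_sub_comm]
    exact hsep y hy x hx

lemma exists_le_gag_of_lt {s c ℓ₀ x₀ y₀ : ℝ} {A B : Set ℝ} {v : ℝ → ℝ} (hs : 0 < 1 + 2 * s)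
    (hc : 0 < c) (hℓ₀ : 0 < ℓ₀) (hA : MeasurableSet A) (hB : MeasurableSet B)
    (hAJ : A ⊆ Ioo x₀ y₀) (hBJ : B ⊆ Ioo x₀ y₀) (hsep : ∀ x ∈ B, ∀ y ∈ A, c ≤ |v y - v x|)
    (hXA : (volume (Ioo x₀ y₀ \ (A ∪ B))).toReal < (volume A).toReal)
    (hXB : (volume (Ioo x₀ y₀ \ (A ∪ B))).toReal < (volume B).toReal) :
    ∃ ℓ > 0, ℓ ≤ max (volume (Ioo x₀ y₀ \ (A ∪ B))).toReal ℓ₀ ∧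
      ENNReal.ofReal (c ^ 2 / (4 * 6 ^ (1 + 2 * s)) * ℓ ^ (-(2 * s - 1))) ≤
        gag s (Ioo x₀ y₀) v := by
  set X := (volume (Ioo x₀ y₀ \ (A ∪ B))).toReal
  set ℓ := min (min (volume A).toReal (volume B).toReal) (max X ℓ₀)
  have hℓ : 0 < ℓ := lt_min (lt_min (ENNReal.toReal_nonneg.trans_lt hXA)
    (ENNReal.toReal_nonneg.trans_lt hXB)) (lt_max_of_lt_right hℓ₀)
  refine ⟨ℓ, hℓ, min_le_right _ _, le_gag_of_separated hs hc hℓ hA hB hAJ hBJ hsep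
    (ENNReal.ofReal_le_of_le_toReal ((min_le_left _ _).trans (min_le_left _ _)))
    (ENNReal.ofReal_le_of_le_toReal ((min_le_left _ _).trans (min_le_right _ _))) ?_⟩
  exact (ENNReal.le_ofReal_iff_toReal_le
    (measure_ne_top_of_subset sdiff_subset measure_Ioo_lt_top.ne) hℓ.le).2
    (le_min (le_min hXA.le hXB.le) (le_max_left _ _))

lemma rpow_mul_rpow_le_add_of_le_max {σ p q X x : ℝ} (hσ : 0 < σ) (hp : 0 < p) (hq : 0 < q)
    (hX : 0 ≤ X) (hx : 0 < x) (hxX : x ≤ max X ((q / p) ^ (1 / (1 + σ)))) :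
    p ^ (σ / (1 + σ)) * q ^ (1 / (1 + σ)) ≤ q * x ^ (-σ) + p * X := by
  have he : 1 / (1 + σ) = 1 - σ / (1 + σ) := by field_simp; ring
  -- `(q / p) ^ (1 / (1 + σ))` minimises `q x^{-σ} + p x`, and both terms are equal there
  have hpx₀ : p * (q / p) ^ (1 / (1 + σ)) = p ^ (σ / (1 + σ)) * q ^ (1 / (1 + σ)) := by
    rw [div_rpow hq.le hp.le, he, rpow_sub hp, rpow_one]
    field_simp
  have hqx₀ : q * ((q / p) ^ (1 / (1 + σ))) ^ (-σ) = p ^ (σ / (1 + σ)) * q ^ (1 / (1 + σ)) := by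
    rw [← rpow_mul (by positivity), show 1 / (1 + σ) * -σ = -(σ / (1 + σ)) by ring,
      rpow_neg (by positivity), ← inv_rpow (by positivity), inv_div, div_rpow hp.le hq.le, he,
      rpow_sub hq, rpow_one]
    field_simp
  rcases le_or_gt ((q / p) ^ (1 / (1 + σ))) X with hx₀ | hx₀
  · rw [← hpx₀]
    nlinarith [show 0 ≤ q * x ^ (-σ) by positivity]
  · rw [max_eq_right hx₀.le] at hxX
    rw [← hqx₀]
    have := rpow_le_rpow_of_nonpos hx hxX (neg_nonpos.2 hσ.le)
    nlinarith

lemma exists_pos_forall_le_max {a p q ε : ℝ} (ha : a < 0) (hp : 0 < p) (hq : 0 < q)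
    (hε : 0 < ε) :
    ∃ x₀ > 0, ∀ {X x : ℝ}, 0 ≤ X → 0 < x → x ≤ max X x₀ →
      p ^ (-a / (1 - a)) * q ^ (1 / (1 - a)) ≤
        q * ε ^ (1 - a) * x ^ a + p * ε ^ (-((1 - a) / (-a))) * X := by
  have h1a : 0 < 1 - a := by linarith
  have ha0 : a ≠ 0 := ha.ne
  have hscale : (p * ε ^ (-((1 - a) / (-a)))) ^ (-a / (1 - a)) * (q * ε ^ (1 - a)) ^ (1 / (1 - a))
      = p ^ (-a / (1 - a)) * q ^ (1 / (1 - a)) := by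
    rw [mul_rpow hp.le (by positivity), mul_rpow hq.le (by positivity), ← rpow_mul hε.le,
      ← rpow_mul hε.le, show -((1 - a) / -a) * (-a / (1 - a)) = -1 by field_simp,
      show (1 - a) * (1 / (1 - a)) = 1 by field_simp, rpow_neg_one, rpow_one]
    field_simp
  refine ⟨(q * ε ^ (1 - a) / (p * ε ^ (-((1 - a) / (-a))))) ^ (1 / (1 - a)), by positivity,
    fun {X x} hX hx hxX ↦ ?_⟩
  have h := rpow_mul_rpow_le_add_of_le_max (σ := -a) (X := X) (by linarith)
    (by positivity : 0 < p * ε ^ (-((1 - a) / (-a)))) (by positivity : 0 < q * ε ^ (1 - a)) hX hx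
  rw [← sub_eq_add_neg, neg_neg, hscale] at h
  exact h hxX

lemma div_rpow_mul_sub_sub_le {σ E L r b : ℝ} (hσ : 0 ≤ σ) (hE : 0 ≤ E) (hL : 0 < L)
    (hr : 0 ≤ r) (hr1 : r < 1) (hb : b < L) :
    E / L ^ σ * (1 - (1 - r) ^ (-σ) - (1 - b / L) ^ (-σ)) ≤ -(E * (L - b) ^ (-σ)) := by
  have hone : 1 ≤ (1 - r) ^ (-σ) :=
    one_le_rpow_of_pos_of_le_one_of_nonpos (by linarith) (by linarith) (by linarith)
  have hbL : 1 - b / L = (L - b) / L := by field_simp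
  calc E / L ^ σ * (1 - (1 - r) ^ (-σ) - (1 - b / L) ^ (-σ))
      ≤ E / L ^ σ * -(1 - b / L) ^ (-σ) := mul_le_mul_of_nonneg_left (by linarith) (by positivity)
    _ = -(E * (L - b) ^ (-σ)) := by
      rw [hbL, div_rpow (by linarith) hL.le, rpow_neg hL.le, rpow_neg (by linarith)]
      field_simp

lemma sub_le_toReal_volume_add_add {x₀ y₀ : ℝ} {A B : Set ℝ} (hxy : x₀ ≤ y₀)
    (hAJ : A ⊆ Ioo x₀ y₀) (hBJ : B ⊆ Ioo x₀ y₀) :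
    y₀ - x₀ ≤ (volume A).toReal + (volume B).toReal + (volume (Ioo x₀ y₀ \ (A ∪ B))).toReal := by
  have hfin : ∀ C ⊆ Ioo x₀ y₀, volume C ≠ ⊤ := fun C hC ↦
    measure_ne_top_of_subset hC measure_Ioo_lt_top.ne
  have h : volume (Ioo x₀ y₀) ≤ volume A + volume B + volume (Ioo x₀ y₀ \ (A ∪ B)) :=
    (measure_mono (by rw [union_sdiff_self]; exact subset_union_right)).trans
      ((measure_union_le _ _).trans (add_le_add (measure_union_le _ _) le_rfl))
  rw [Real.volume_Ioo] at h
  have := ENNReal.toReal_mono (by simp [hfin A hAJ, hfin B hBJ, hfin _ sdiff_subset]) h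
  rwa [ENNReal.toReal_ofReal (sub_nonneg.2 hxy), ENNReal.toReal_add
    (by simp [hfin A hAJ, hfin B hBJ]) (hfin _ sdiff_subset),
    ENNReal.toReal_add (hfin A hAJ) (hfin B hBJ)] at this

lemma ofReal_mul_toReal_le_setLIntegral {α : Type*} [MeasurableSpace α] {μ : Measure α}
    {f : α → ℝ} {M J : Set α} {m : ℝ} (hM : MeasurableSet M) (hMJ : M ⊆ J) (hm : 0 ≤ m)
    (hf : ∀ x ∈ M, m ≤ f x) :
    ENNReal.ofReal (m * (μ M).toReal) ≤ ∫⁻ x in J, ENNReal.ofReal (f x) ∂μ :=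
  calc ENNReal.ofReal (m * (μ M).toReal) ≤ ENNReal.ofReal m * μ M := by
        rw [ENNReal.ofReal_mul hm]
        exact mul_le_mul_right ENNReal.ofReal_toReal_le _
    _ = ∫⁻ _ in M, ENNReal.ofReal m ∂μ := (setLIntegral_const _ _).symm
    _ ≤ ∫⁻ x in M, ENNReal.ofReal (f x) ∂μ :=
        setLIntegral_mono' hM fun x hx ↦ ENNReal.ofReal_le_ofReal (hf x hx)
    _ ≤ _ := lintegral_mono_set hMJ

lemma ofReal_le_Gfun {a s D ε K P : ℝ} {V v : ℝ → ℝ} {E : Set ℝ} (hD : 0 ≤ D) (hε : 0 ≤ ε)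
    (hK : ENNReal.ofReal K ≤ gag s E v)
    (hP : ENNReal.ofReal P ≤ ∫⁻ x in E, ENNReal.ofReal (V (v x))) :
    ENNReal.ofReal (ε ^ (1 - a) / D * K + ε ^ (-((1 - a) / (-a))) * P) ≤ Gfun a s D V ε E v :=
  ENNReal.ofReal_add_le.trans <| by
    rw [ENNReal.ofReal_mul (by positivity), ENNReal.ofReal_mul (by positivity)]
    exact add_le_add (mul_le_mul_right hK _) (mul_le_mul_right hP _)

theorem ofReal_le_Gfun_of_separated {a s D c m q ε x₀ y₀ : ℝ} {V v : ℝ → ℝ} {A B : Set ℝ}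
    (ha : a < 0) (hs : 2 * s - 1 = -a) (hD : 0 < D) (hc : 0 < c) (hm : 0 < m) (hq : 0 < q)
    (hq₁ : q ≤ c ^ 2 * 2 ^ a) (hq₂ : q ≤ c ^ 2 / (4 * 6 ^ (1 + 2 * s)) / D) (hε : 0 < ε)
    (hxy : x₀ < y₀) (hA : MeasurableSet A) (hB : MeasurableSet B) (hAJ : A ⊆ Ioo x₀ y₀)
    (hBJ : B ⊆ Ioo x₀ y₀) (hsep : ∀ x ∈ B, ∀ y ∈ A, c ≤ |v y - v x|)
    (hV : ∀ x ∈ Ioo x₀ y₀ \ (A ∪ B), m ≤ V (v x))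
    (hA1 : (volume A).toReal / (y₀ - x₀) < 1) (hB1 : (volume B).toReal / (y₀ - x₀) < 1) :
    ENNReal.ofReal (ε ^ (1 - a) * c ^ 2 / (y₀ - x₀) ^ (2 * s - 1) *
        (1 - (1 - (volume A).toReal / (y₀ - x₀)) ^ (-(2 * s - 1)) -
          (1 - (volume B).toReal / (y₀ - x₀)) ^ (-(2 * s - 1))) +
        m ^ (-a / (1 - a)) * q ^ (1 / (1 - a))) ≤ Gfun a s D V ε (Ioo x₀ y₀) v := by
  wlog hAB : (volume A).toReal ≤ (volume B).toReal generalizing A B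
  · have h := this hB hA hBJ hAJ (fun x hx y hy ↦ by rw [abs_sub_comm]; exact hsep y hy x hx)
      (by rwa [union_comm]) hB1 hA1 (le_of_not_ge hAB)
    rwa [sub_right_comm] at h
  have hcover := sub_le_toReal_volume_add_add hxy.le hAJ hBJ
  set L := y₀ - x₀
  have hL : 0 < L := sub_pos.2 hxy
  set M := Ioo x₀ y₀ \ (A ∪ B)
  set X := (volume M).toReal
  have hX : 0 ≤ X := ENNReal.toReal_nonneg
  have hpot : ENNReal.ofReal (m * X) ≤ ∫⁻ x in Ioo x₀ y₀, ENNReal.ofReal (V (v x)) :=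
    ofReal_mul_toReal_le_setLIntegral (measurableSet_Ioo.diff (hA.union hB)) sdiff_subset hm.le hV
  obtain ⟨ℓ₀, hℓ₀, hK⟩ := exists_pos_forall_le_max ha hm hq hε
  have hBpos : 0 < L - (volume B).toReal := by
    rw [div_lt_one hL] at hB1
    linarith
  have hbracket := div_rpow_mul_sub_sub_le (σ := -a) (E := ε ^ (1 - a) * c ^ 2) (by linarith)
    (by positivity) hL (by positivity) hA1 (by linarith : (volume B).toReal < L)
  rw [neg_neg] at hbracket
  rw [hs, neg_neg]
  rcases le_or_gt (volume A).toReal X with hAX | hXA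
  · have hX2 : L - (volume B).toReal ≤ 2 * X := by linarith
    have hXpos : 0 < X := by linarith
    have hpow : (2 * X) ^ a ≤ (L - (volume B).toReal) ^ a :=
      rpow_le_rpow_of_nonpos hBpos hX2 ha.le
    rw [mul_rpow zero_le_two hX] at hpow
    have := hK hX hXpos (le_max_left _ _)
    refine (ENNReal.ofReal_le_ofReal ?_).trans
      (ofReal_le_Gfun (K := 0) hD.le hε.le (by simp) hpot)
    have hE : 0 < ε ^ (1 - a) := by positivity
    nlinarith [mul_le_mul_of_nonneg_left hq₁ (mul_nonneg hE.le (rpow_nonneg hX a)),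
      mul_le_mul_of_nonneg_left hpow (mul_nonneg hE.le (sq_nonneg c))]
  · obtain ⟨ℓ, hℓ, hℓmax, hkin⟩ := exists_le_gag_of_lt (s := s) (v := v) (by linarith) hc hℓ₀
      hA hB hAJ hBJ hsep hXA (hXA.trans_le hAB)
    rw [hs, neg_neg] at hkin
    refine (ENNReal.ofReal_le_ofReal ?_).trans (ofReal_le_Gfun hD.le hε.le hkin hpot)
    have hE : 0 < ε ^ (1 - a) := by positivity
    have hqD : q * ε ^ (1 - a) * ℓ ^ a ≤
        ε ^ (1 - a) / D * (c ^ 2 / (4 * 6 ^ (1 + 2 * s)) * ℓ ^ a) := by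
      rw [show ε ^ (1 - a) / D * (c ^ 2 / (4 * 6 ^ (1 + 2 * s)) * ℓ ^ a) =
        c ^ 2 / (4 * 6 ^ (1 + 2 * s)) / D * ε ^ (1 - a) * ℓ ^ a by ring]
      gcongr
    nlinarith [hK hX hℓ hℓmax,
      mul_nonneg (mul_nonneg hE.le (sq_nonneg c)) (rpow_nonneg hBpos.le a)]

theorem stmt_8_general (a s D α' β' : ℝ) (V : ℝ → ℝ)
    (ha : a ∈ Set.Ioo (-1 : ℝ) 0) (hs : s = (1 - a) / 2) (hD : 0 < D)
    (hV0 : ∀ t, 0 ≤ V t) (hVc : Continuous V)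
    (hVz : ∀ t, V t = 0 ↔ t = α' ∨ t = β') :
    ∃ Cs : ℝ, 0 < Cs ∧
      ∀ δ : ℝ, 0 < δ → δ < (β' - α') / 2 →
        ∃ Cδ : ℝ, 0 < Cδ ∧
          ∀ (x₀ y₀ ε : ℝ) (v : ℝ → ℝ), x₀ < y₀ → 0 < ε → Measurable v →
            ∀ rA rB : ℝ,
              rA = (volume {x ∈ Ioo x₀ y₀ | v x ≤ α' + δ}).toReal / (y₀ - x₀) →
              rB = (volume {x ∈ Ioo x₀ y₀ | β' - δ ≤ v x}).toReal / (y₀ - x₀) →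
              rA < 1 → rB < 1 →
              ENNReal.ofReal
                  (ε ^ (1 - a) * Cs * (β' - α' - 2 * δ) ^ 2 / (y₀ - x₀) ^ (2 * s - 1) *
                      (1 - (1 - rA) ^ (-(2 * s - 1)) - (1 - rB) ^ (-(2 * s - 1))) + Cδ) ≤
                Gfun a s D V ε (Ioo x₀ y₀) v := by
  have hs' : 2 * s - 1 = -a := by rw [hs]; ring
  refine ⟨1, one_pos, fun δ hδ hδ2 ↦ ?_⟩
  set c := β' - α' - 2 * δ
  have hc : 0 < c := by linarith
  obtain ⟨m, hm, hVm⟩ : ∃ m, 0 < m ∧ ∀ t ∈ Icc (α' + δ) (β' - δ), m ≤ V t :=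
    isCompact_Icc.exists_forall_le' hVc.continuousOn fun t ht ↦ (hV0 t).lt_of_ne' fun h ↦ by
      rcases (hVz t).1 h with rfl | rfl <;> linarith [ht.1, ht.2]
  set q := min (c ^ 2 * 2 ^ a) (c ^ 2 / (4 * 6 ^ (1 + 2 * s)) / D)
  have hq : 0 < q := lt_min (by positivity) (by positivity)
  refine ⟨m ^ (-a / (1 - a)) * q ^ (1 / (1 - a)), by positivity, ?_⟩
  rintro x₀ y₀ ε v hxy hε hv rA rB rfl rfl hA1 hB1
  rw [mul_one]
  refine ofReal_le_Gfun_of_separated ha.2 hs' hD hc hm hq (min_le_left _ _) (min_le_right _ _) hε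
    hxy (measurableSet_Ioo.inter (hv measurableSet_Iic))
    (measurableSet_Ioo.inter (hv measurableSet_Ici)) (sep_subset _ _) (sep_subset _ _)
    (fun x hx y hy ↦ ?_) (fun x hx ↦ hVm _ ?_) hA1 hB1
  · rw [abs_sub_comm]
    exact le_abs.2 (Or.inl (by linarith [hx.2, hy.2]))
  · obtain ⟨hxJ, hxAB⟩ := hx
    simp only [mem_union, mem_sep_iff, not_or, not_and, not_le] at hxAB
    exact ⟨(hxAB.1 hxJ).le, (hxAB.2 hxJ).le⟩

theorem stmt_8 (a s D α' β' : ℝ) (V : ℝ → ℝ)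
    (ha : a ∈ Set.Ioo (-1 : ℝ) 0) (hs : s = (1 - a) / 2) (hD : 0 < D) (hαβ : α' < β')
    (hV0 : ∀ t, 0 ≤ V t) (hVc : Continuous V)
    (hVz : ∀ t, V t = 0 ↔ t = α' ∨ t = β') :
    ∃ Cs : ℝ, 0 < Cs ∧
      ∀ δ : ℝ, 0 < δ → δ < (β' - α') / 2 →
        ∃ Cδ : ℝ, 0 < Cδ ∧
          ∀ (x₀ y₀ ε : ℝ) (v : ℝ → ℝ), x₀ < y₀ → 0 < ε → Measurable v →
            ∀ rA rB : ℝ,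
              rA = (volume {x ∈ Ioo x₀ y₀ | v x ≤ α' + δ}).toReal / (y₀ - x₀) →
              rB = (volume {x ∈ Ioo x₀ y₀ | β' - δ ≤ v x}).toReal / (y₀ - x₀) →
              rA < 1 → rB < 1 →
              ENNReal.ofReal
                  (ε ^ (1 - a) * Cs * (β' - α' - 2 * δ) ^ 2 / (y₀ - x₀) ^ (2 * s - 1) *
                      (1 - (1 - rA) ^ (-(2 * s - 1)) - (1 - rB) ^ (-(2 * s - 1))) + Cδ) ≤
                Gfun a s D V ε (Ioo x₀ y₀) v :=
  stmt_8_general a s D α' β' V ha hs hD hV0 hVc hVz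
end

section
/- Let 0 < δ < (β' − α')/2 and set m_δ := min{ V(t) : α' + δ ≤ t ≤ β' − δ } (which is strictly positive). Then every measurable function v : ℝ → ℝ with v(x) → α' as x → −∞ and v(x) → β' as x → +∞ satisfies G₁[v, ℝ] ≥ ((2s)^{(2s−1)/(2s)} / (2s − 1)) · ((β' − α' − 2δ)² / D)^{1/(2s)} · m_δ^{(2s−1)/(2s)} > 0. -/
/-!
Write `A = {v ≤ α' + δ}`, `B = {v ≥ β' - δ}` and `ℓ = |{α' + δ < v < β' - δ}|`, so that the
potential term is at least `m_δ ℓ`. For `x ∈ A` put `φ x = |A ∩ (x, ∞)|`. Outside `B`, the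
half-line `(x, ∞)` has measure at most `φ x + ℓ`, so a bathtub argument bounds the `y`-integral of
the kernel over `B` from below by `(β' - α' - 2δ)² (φ x + ℓ)^(-2s) / 2s`. As `φ` decreases
from `∞` to `0` with slope at most `1`, integrating over `A` gives at least
`∫₀^∞ (u + ℓ)^(-2s) du = ℓ^(1-2s) / (2s - 1)`. Hence
`G₁ ≥ (β' - α' - 2δ)² ℓ^(1-2s) / (2s (2s - 1) D) + m_δ ℓ`, and weighted AM-GM minimises the right
side over `ℓ`.
-/

open Real MeasureTheory Set Filter
open scoped ENNReal

/-- The functional G₁[v, ℝ] := (1/D) ∬ |v(x)−v(x')|²/|x−x'|^{1+2s} + ∫ V(v); it is the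
functional G_ε with ε = 1 and E = ℝ. -/
noncomputable def Gone (a s D : ℝ) (V : ℝ → ℝ) (v : ℝ → ℝ) : ℝ≥0∞ :=
  ENNReal.ofReal ((1 : ℝ) ^ (1 - a) / D) * gag s univ v +
    ENNReal.ofReal ((1 : ℝ) ^ (-((1 - a) / (-a)))) * ∫⁻ x, ENNReal.ofReal (V (v x))

lemma lintegral_Ioi_sub_rpow {p c q : ℝ} (hp : p < -1) (hcq : c < q) :
    ∫⁻ y in Ioi q, ENNReal.ofReal ((y - c) ^ p) =
      ENNReal.ofReal ((q - c) ^ (p + 1) / -(p + 1)) := by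
  have hqc : 0 < q - c := sub_pos.2 hcq
  have hshift := (measurePreserving_add_right volume c).setLIntegral_comp_preimage_emb
    (measurableEmbedding_addRight c) (fun y => ENNReal.ofReal ((y - c) ^ p)) (Ioi q)
  have hpre : (· + c) ⁻¹' Ioi q = Ioi (q - c) := by
    ext y; simp [sub_lt_iff_lt_add]
  simp only [hpre, add_sub_cancel_right] at hshift
  rw [← hshift, ← ofReal_integral_eq_lintegral_ofReal (integrableOn_Ioi_rpow_of_lt hp hqc)
    ((ae_restrict_iff' measurableSet_Ioi).2 (ae_of_all _ fun w hw =>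
      rpow_nonneg (hqc.trans hw).le p)), integral_Ioi_rpow_of_lt hp hqc, div_neg, neg_div]

lemma volume_sdiff_inter_Ioi_le {B : Set ℝ} (hB : MeasurableSet B) {x q : ℝ}
    (hN : volume (Ioi x \ B) ≤ ENNReal.ofReal q) :
    volume ((Ioi x \ B) ∩ Ioi (x + q)) ≤ volume (B ∩ Ioc x (x + q)) := by
  have hIoc : volume (B ∩ Ioc x (x + q)) + volume (Ioc x (x + q) \ B) = ENNReal.ofReal q := by
    rw [inter_comm, measure_inter_add_sdiff₀ _ hB.nullMeasurableSet, Real.volume_Ioc,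
      add_sub_cancel_left]
  have hsplit : volume ((Ioi x \ B) ∩ Ioi (x + q)) + volume (Ioc x (x + q) \ B) ≤
      volume (Ioi x \ B) := by
    rw [← measure_union (Ioc_disjoint_Ioi_same.symm.mono inter_subset_right sdiff_subset)
      (measurableSet_Ioc.diff hB)]
    refine measure_mono (union_subset inter_subset_left fun y hy => ⟨hy.1.1, hy.2⟩)
  have hfin : volume (Ioc x (x + q) \ B) ≠ ⊤ :=
    ne_top_of_le_ne_top (by simp [Real.volume_Ioc]) (measure_mono sdiff_subset)
  rw [← ENNReal.add_le_add_iff_right hfin, hIoc]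
  exact hsplit.trans hN

/-- Bathtub principle: the mass of `g` beyond `x + q` that misses `B` is dominated by the mass on
`B ∩ (x, x + q]`, which is at least as large and where `g` is larger. -/
lemma setLIntegral_Ioi_add_le_of_antitoneOn {B : Set ℝ} (hB : MeasurableSet B) {x q : ℝ}
    (hq : 0 < q) (hN : volume (Ioi x \ B) ≤ ENNReal.ofReal q) {g : ℝ → ℝ≥0∞}
    (hg : AntitoneOn g (Ioi x)) :
    ∫⁻ y in Ioi (x + q), g y ≤ ∫⁻ y in B ∩ Ioi x, g y := by
  have hxq : x < x + q := lt_add_of_pos_right x hq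
  have hNm : MeasurableSet ((Ioi x \ B) ∩ Ioi (x + q)) :=
    (measurableSet_Ioi.diff hB).inter measurableSet_Ioi
  have htail : ∫⁻ y in (Ioi x \ B) ∩ Ioi (x + q), g y ≤ ∫⁻ y in B ∩ Ioc x (x + q), g y :=
    calc ∫⁻ y in (Ioi x \ B) ∩ Ioi (x + q), g y
        ≤ ∫⁻ _ in (Ioi x \ B) ∩ Ioi (x + q), g (x + q) :=
          setLIntegral_mono' hNm fun y hy => hg hxq hy.1.1 hy.2.le
      _ = g (x + q) * volume ((Ioi x \ B) ∩ Ioi (x + q)) := setLIntegral_const _ _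
      _ ≤ g (x + q) * volume (B ∩ Ioc x (x + q)) :=
          mul_le_mul_right (volume_sdiff_inter_Ioi_le hB hN) _
      _ = ∫⁻ _ in B ∩ Ioc x (x + q), g (x + q) := (setLIntegral_const _ _).symm
      _ ≤ ∫⁻ y in B ∩ Ioc x (x + q), g y :=
          setLIntegral_mono' (hB.inter measurableSet_Ioc) fun y hy => hg hy.2.1 hxq hy.2.2
  have hsplit : Ioi (x + q) = (B ∩ Ioi (x + q)) ∪ ((Ioi x \ B) ∩ Ioi (x + q)) := by
    rw [← union_inter_distrib_right, union_sdiff_self,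
      inter_eq_right.2 (subset_union_of_subset_right (Ioi_subset_Ioi hxq.le) _)]
  have hsplit' : B ∩ Ioi x = (B ∩ Ioi (x + q)) ∪ (B ∩ Ioc x (x + q)) := by
    rw [← inter_union_distrib_left, union_comm, Ioc_union_Ioi_eq_Ioi hxq.le]
  rw [hsplit, hsplit', lintegral_union hNm, lintegral_union (hB.inter measurableSet_Ioc)]
  · exact add_le_add le_rfl htail
  · exact (Ioc_disjoint_Ioi_same.symm.mono inter_subset_right inter_subset_right)
  · exact disjoint_sdiff_right.mono inter_subset_left inter_subset_left

lemma ofReal_mul_rpow_div_le_lintegral {v : ℝ → ℝ} {B : Set ℝ} (hB : MeasurableSet B)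
    {x q M σ : ℝ} (hq : 0 < q) (hσ : 0 < σ) (hM : 0 ≤ M)
    (hN : volume (Ioi x \ B) ≤ ENNReal.ofReal q) (hgap : ∀ y ∈ B, M ≤ v y - v x) :
    ENNReal.ofReal (M ^ 2 / σ * q ^ (-σ)) ≤
      ∫⁻ y, ENNReal.ofReal ((v y - v x) ^ 2 / |y - x| ^ (1 + σ)) := by
  have hanti : AntitoneOn (fun y => ENNReal.ofReal (M ^ 2 * (y - x) ^ (-(1 + σ)))) (Ioi x) :=
    fun y hy z _ hyz => ENNReal.ofReal_le_ofReal <| mul_le_mul_of_nonneg_left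
      (rpow_le_rpow_of_nonpos (sub_pos.2 hy) (by linarith) (by linarith)) (sq_nonneg M)
  calc ENNReal.ofReal (M ^ 2 / σ * q ^ (-σ))
      = ∫⁻ y in Ioi (x + q), ENNReal.ofReal (M ^ 2 * (y - x) ^ (-(1 + σ))) := by
        simp_rw [ENNReal.ofReal_mul (sq_nonneg M)]
        rw [lintegral_const_mul' _ _ ENNReal.ofReal_ne_top,
          lintegral_Ioi_sub_rpow (by linarith) (lt_add_of_pos_right x hq), add_sub_cancel_left,
          ← ENNReal.ofReal_mul (sq_nonneg M), show -(1 + σ) + 1 = -σ by ring, neg_neg]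
        ring_nf
    _ ≤ ∫⁻ y in B ∩ Ioi x, ENNReal.ofReal (M ^ 2 * (y - x) ^ (-(1 + σ))) :=
        setLIntegral_Ioi_add_le_of_antitoneOn hB hq hN hanti
    _ ≤ ∫⁻ y in B ∩ Ioi x, ENNReal.ofReal ((v y - v x) ^ 2 / |y - x| ^ (1 + σ)) := by
        refine setLIntegral_mono' (hB.inter measurableSet_Ioi) fun y ⟨hyB, hyx⟩ => ?_
        have hyx : 0 < y - x := sub_pos.2 hyx
        rw [abs_of_pos hyx, rpow_neg hyx.le, ← div_eq_mul_inv]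
        gcongr
        exact hgap y hyB
    _ ≤ ∫⁻ y, ENNReal.ofReal ((v y - v x) ^ 2 / |y - x| ^ (1 + σ)) :=
        setLIntegral_le_lintegral _ _

lemma setLIntegral_Ioi_zero_le_of_antitoneOn {A : Set ℝ} {φ : ℝ → ℝ}
    (hφm : Measurable φ) (hφ0 : ∀ x, 0 ≤ φ x)
    (hφA : ∀ r, 0 < r → ENNReal.ofReal r ≤ volume (A ∩ {x | φ x < r}))
    {g : ℝ → ℝ} (hgm : Measurable g) (hg0 : ∀ u, 0 ≤ u → 0 ≤ g u) (hg : AntitoneOn g (Ici 0)) :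
    ∫⁻ u in Ioi 0, ENNReal.ofReal (g u) ≤ ∫⁻ x in A, ENNReal.ofReal (g (φ x)) := by
  rw [lintegral_eq_lintegral_meas_lt _ ((ae_restrict_iff' measurableSet_Ioi).2
      (ae_of_all _ fun u hu => hg0 u (le_of_lt hu))) hgm.aemeasurable,
    lintegral_eq_lintegral_meas_lt _ (ae_of_all _ fun x => hg0 _ (hφ0 x))
      (hgm.comp hφm).aemeasurable]
  -- By the layer-cake formula it suffices to compare superlevel sets: the one of `g` is an initial
  -- segment of `(0, ∞)`, and `A ∩ {φ < r}` lies in that of `g ∘ φ` for every `r` inside it.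
  refine lintegral_mono fun t => ?_
  rw [Measure.restrict_apply (measurableSet_lt measurable_const hgm),
    Measure.restrict_apply (measurableSet_lt measurable_const (hgm.comp hφm) :
      MeasurableSet {x | t < g (φ x)})]
  refine le_of_forall_lt_imp_le_of_dense fun c hc => ?_
  obtain ⟨r, hr0, rfl⟩ : ∃ r, 0 ≤ r ∧ c = ENNReal.ofReal r :=
    ⟨c.toReal, ENNReal.toReal_nonneg, (ENNReal.ofReal_toReal (ne_top_of_lt hc)).symm⟩
  rcases hr0.eq_or_lt with rfl | hr
  · simp
  obtain ⟨u, ⟨htu, hu0⟩, hru⟩ : ∃ u ∈ {u | t < g u} ∩ Ioi 0, r < u := by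
    by_contra! h
    refine hc.not_ge ((measure_mono (show _ ⊆ Ioc 0 r from fun u hu => ⟨hu.2, h u hu⟩)).trans ?_)
    rw [Real.volume_Ioc, sub_zero]
  calc ENNReal.ofReal r ≤ volume (A ∩ {x | φ x < r}) := hφA r hr
    _ ≤ volume ({x | t < g (φ x)} ∩ A) := measure_mono fun x ⟨hxA, hxr⟩ =>
        ⟨htu.trans_le (hg (hφ0 x) (mem_Ici.2 (le_of_lt hu0)) (hxr.out.trans hru).le), hxA⟩

noncomputable def tailVolume (A : Set ℝ) (x : ℝ) : ℝ := (volume (A ∩ Ioi x)).toReal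

section tailVolume

variable {A : Set ℝ} {R : ℝ}

lemma tailVolume_nonneg (x : ℝ) : 0 ≤ tailVolume A x := ENNReal.toReal_nonneg

lemma volume_inter_Ioi_ne_top (hA : A ⊆ Iio R) (x : ℝ) : volume (A ∩ Ioi x) ≠ ⊤ :=
  ne_top_of_le_ne_top (by rw [Real.volume_Ioo]; exact ENNReal.ofReal_ne_top)
    (measure_mono (show A ∩ Ioi x ⊆ Ioo x R from fun _ hy => ⟨hy.2, hA hy.1⟩))

lemma volume_inter_Ioi_eq_ofReal (hA : A ⊆ Iio R) (x : ℝ) :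
    volume (A ∩ Ioi x) = ENNReal.ofReal (tailVolume A x) :=
  (ENNReal.ofReal_toReal (volume_inter_Ioi_ne_top hA x)).symm

lemma tailVolume_antitone (hA : A ⊆ Iio R) : Antitone (tailVolume A) := fun _ _ hxy =>
  ENNReal.toReal_mono (volume_inter_Ioi_ne_top hA _)
    (measure_mono (inter_subset_inter_right _ (Ioi_subset_Ioi hxy)))

lemma tailVolume_le_add_sub (hA : A ⊆ Iio R) {x y : ℝ} (hxy : x ≤ y) :
    tailVolume A x ≤ tailVolume A y + (y - x) := by
  have h := (measure_mono (μ := volume) (show A ∩ Ioi x ⊆ (A ∩ Ioi y) ∪ Ioc x y from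
    fun z ⟨hzA, hxz⟩ => (le_or_gt z y).elim (fun h => Or.inr ⟨hxz, h⟩)
      (fun h => Or.inl ⟨hzA, h⟩))).trans (measure_union_le _ _)
  rwa [volume_inter_Ioi_eq_ofReal hA, volume_inter_Ioi_eq_ofReal hA, Real.volume_Ioc,
    ← ENNReal.ofReal_add (tailVolume_nonneg y) (sub_nonneg.2 hxy),
    ENNReal.ofReal_le_ofReal_iff (by linarith [tailVolume_nonneg (A := A) y])] at h

lemma sub_le_tailVolume (hA : A ⊆ Iio R) {R' x : ℝ} (hA' : Iic R' ⊆ A) :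
    R' - x ≤ tailVolume A x := by
  have h := measure_mono (μ := volume) (show Ioc x R' ⊆ A ∩ Ioi x from
    fun z hz => ⟨hA' hz.2, hz.1⟩)
  rwa [volume_inter_Ioi_eq_ofReal hA, Real.volume_Ioc,
    ENNReal.ofReal_le_ofReal_iff (tailVolume_nonneg x)] at h

lemma tailVolume_eq_zero (hA : A ⊆ Iio R) {x : ℝ} (hx : R ≤ x) : tailVolume A x = 0 := by
  have : A ∩ Ioi x = ∅ := eq_empty_of_forall_notMem fun y hy =>
    (hA hy.1).out.not_ge (hx.trans hy.2.le)
  simp [tailVolume, this]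

/-- Lebesgue measure on `A`, pushed forward by `tailVolume A`, dominates Lebesgue measure on
`(0, ∞)`. -/
lemma ofReal_le_volume_inter_tailVolume_lt (hA : A ⊆ Iio R) {R' r : ℝ} (hA' : Iic R' ⊆ A)
    (hr : 0 < r) : ENNReal.ofReal r ≤ volume (A ∩ {x | tailVolume A x < r}) := by
  set S := {x | tailVolume A x < r}
  have hSne : S.Nonempty := ⟨R, by simp [S, tailVolume_eq_zero hA le_rfl, hr]⟩
  have hSbdd : BddBelow S := ⟨R' - r, fun z (hz : tailVolume A z < r) => by
    by_contra! h
    linarith [sub_le_tailVolume hA hA' (x := z)]⟩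
  have hIoiS : Ioi (sInf S) ⊆ S := fun y hy => by
    obtain ⟨z, hzS, hzy⟩ := (csInf_lt_iff hSbdd hSne).1 hy
    exact (tailVolume_antitone hA hzy.le).trans_lt hzS
  have hrt : r ≤ tailVolume A (sInf S) := le_of_forall_sub_le fun ε hε => by
    have : r ≤ tailVolume A (sInf S - ε) :=
      not_lt.1 fun h => (csInf_le hSbdd (show sInf S - ε ∈ S from h)).not_gt (by linarith)
    linarith [ tailVolume_le_add_sub hA (show sInf S - ε ≤ sInf S by linarith)]
  calc ENNReal.ofReal r ≤ ENNReal.ofReal (tailVolume A (sInf S)) := ENNReal.ofReal_le_ofReal hrt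
    _ = volume (A ∩ Ioi (sInf S)) := (volume_inter_Ioi_eq_ofReal hA _).symm
    _ ≤ volume (A ∩ S) := measure_mono (inter_subset_inter_right _ hIoiS)

end tailVolume

lemma ofReal_le_gag {s : ℝ} (hs : 1 / 2 < s) {v : ℝ → ℝ} (hv : Measurable v) {a b ℓ : ℝ}
    (hab : a < b) (hbot : ∀ᶠ x in atBot, v x ≤ a) (htop : ∀ᶠ x in atTop, b ≤ v x)
    (hℓ : 0 < ℓ) (hC : volume {x | v x ∈ Ioo a b} ≤ ENNReal.ofReal ℓ) :
    ENNReal.ofReal ((b - a) ^ 2 / (2 * s * (2 * s - 1)) * ℓ ^ (1 - 2 * s)) ≤ gag s univ v := by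
  set A := {x | v x ≤ a}
  set B := {x | b ≤ v x}
  have hBm : MeasurableSet B := hv measurableSet_Ici
  obtain ⟨R₁, hR₁⟩ := eventually_atBot.1 hbot
  obtain ⟨R₂, hR₂⟩ := eventually_atTop.1 htop
  have hA' : Iic R₁ ⊆ A := fun x hx => hR₁ x hx
  have hA : A ⊆ Iio R₂ := fun x (hx : v x ≤ a) =>
    not_le.1 fun h => (hR₂ x h).not_gt (hx.trans_lt hab)
  set φ := tailVolume A
  set K := (b - a) ^ 2 / (2 * s)
  have hK : 0 ≤ K := by positivity
  have hN : ∀ x, volume (Ioi x \ B) ≤ ENNReal.ofReal (φ x + ℓ) := fun x =>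
    calc volume (Ioi x \ B) ≤ volume (A ∩ Ioi x) + volume {x | v x ∈ Ioo a b} :=
          (measure_mono (show Ioi x \ B ⊆ A ∩ Ioi x ∪ {x | v x ∈ Ioo a b} from
            fun y ⟨hxy, hyB⟩ => (le_or_gt (v y) a).elim (fun h => Or.inl ⟨h, hxy⟩)
              fun h => Or.inr ⟨h, not_le.1 hyB⟩)).trans (measure_union_le _ _)
      _ ≤ ENNReal.ofReal (φ x) + ENNReal.ofReal ℓ :=
          add_le_add (volume_inter_Ioi_eq_ofReal hA x).le hC
      _ = ENNReal.ofReal (φ x + ℓ) :=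
          (ENNReal.ofReal_add (tailVolume_nonneg x) hℓ.le).symm
  have hinner : ∀ x ∈ A, ENNReal.ofReal (K * (φ x + ℓ) ^ (-(2 * s))) ≤
      ∫⁻ y, ENNReal.ofReal ((v y - v x) ^ 2 / |y - x| ^ (1 + 2 * s)) := fun x (hx : v x ≤ a) =>
    ofReal_mul_rpow_div_le_lintegral hBm (add_pos_of_nonneg_of_pos (tailVolume_nonneg x) hℓ)
      (by linarith) (sub_nonneg.2 hab.le) (hN x) fun y (hy : b ≤ v y) => by linarith
  set g : ℝ → ℝ := fun u => K * (u + ℓ) ^ (-(2 * s))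
  have hg : AntitoneOn g (Ici 0) := fun u (hu : 0 ≤ u) w _ huw =>
    mul_le_mul_of_nonneg_left (rpow_le_rpow_of_nonpos (by linarith) (by linarith)
      (by linarith)) hK
  calc ENNReal.ofReal ((b - a) ^ 2 / (2 * s * (2 * s - 1)) * ℓ ^ (1 - 2 * s))
      = ∫⁻ u in Ioi 0, ENNReal.ofReal (g u) := by
        simp_rw [g, ENNReal.ofReal_mul hK, ← sub_neg_eq_add _ ℓ]
        rw [lintegral_const_mul' _ _ ENNReal.ofReal_ne_top,
          lintegral_Ioi_sub_rpow (by linarith) (neg_neg_of_pos hℓ), ← ENNReal.ofReal_mul hK,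
          zero_sub, neg_neg, show -(2 * s) + 1 = 1 - 2 * s by ring, neg_sub]
        simp only [K, ← div_div]
        ring_nf
    _ ≤ ∫⁻ x in A, ENNReal.ofReal (g (φ x)) :=
        setLIntegral_Ioi_zero_le_of_antitoneOn (tailVolume_antitone hA).measurable
          tailVolume_nonneg (fun r hr => ofReal_le_volume_inter_tailVolume_lt hA hA' hr)
          (by fun_prop) (fun u hu => by positivity) hg
    _ ≤ ∫⁻ x in A, ∫⁻ y, ENNReal.ofReal ((v y - v x) ^ 2 / |y - x| ^ (1 + 2 * s)) :=
        setLIntegral_mono' (hv measurableSet_Iic) hinner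
    _ ≤ gag s univ v := by
        simp only [gag, Measure.restrict_univ]
        exact setLIntegral_le_lintegral _ _

/-- Weighted AM-GM with weights `1/σ`, `(σ-1)/σ`: the left side is the minimum of the right side
over `ℓ > 0`, attained at `ℓ = (A / (σ * m)) ^ (1 / σ)`. -/
lemma amgm_le_div_mul_rpow_add_mul {σ A m ℓ : ℝ} (hσ : 1 < σ) (hA : 0 < A) (hm : 0 < m)
    (hℓ : 0 < ℓ) :
    σ ^ ((σ - 1) / σ) / (σ - 1) * A ^ (1 / σ) * m ^ ((σ - 1) / σ) ≤
      A / (σ * (σ - 1)) * ℓ ^ (1 - σ) + m * ℓ := by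
  have hσ0 : 0 < σ := by linarith
  have hσ1 : 0 < σ - 1 := by linarith
  have hw : 1 / σ + (σ - 1) / σ = 1 := by field_simp; ring
  set p₁ := A / (σ - 1) * ℓ ^ (1 - σ)
  set p₂ := σ * m / (σ - 1) * ℓ
  have hden : (σ - 1) ^ (1 / σ) * (σ - 1) ^ ((σ - 1) / σ) = σ - 1 := by
    rw [← rpow_add hσ1, hw, rpow_one]
  have hℓexp : ℓ ^ ((1 - σ) / σ) * ℓ ^ ((σ - 1) / σ) = 1 := by
    rw [← rpow_add hℓ, show (1 - σ) / σ + (σ - 1) / σ = 0 by ring, rpow_zero]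
  calc σ ^ ((σ - 1) / σ) / (σ - 1) * A ^ (1 / σ) * m ^ ((σ - 1) / σ)
      = p₁ ^ (1 / σ) * p₂ ^ ((σ - 1) / σ) := by
        rw [mul_rpow (by positivity) (rpow_pos_of_pos hℓ _).le, mul_rpow (by positivity) hℓ.le,
          div_rpow hA.le hσ1.le, div_rpow (by positivity) hσ1.le, mul_rpow hσ0.le hm.le,
          ← rpow_mul hℓ.le]
        have hd₁ : (σ - 1) ^ (1 / σ) ≠ 0 := (rpow_pos_of_pos hσ1 _).ne'
        have hd₂ : (σ - 1) ^ ((σ - 1) / σ) ≠ 0 := (rpow_pos_of_pos hσ1 _).ne'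
        field_simp
        linear_combination hden - (σ - 1) * hℓexp
    _ ≤ 1 / σ * p₁ + (σ - 1) / σ * p₂ :=
        geom_mean_le_arith_mean2_weighted (by positivity) (by positivity) (by positivity)
          (by positivity) hw
    _ = A / (σ * (σ - 1)) * ℓ ^ (1 - σ) + m * ℓ := by
        simp only [p₁, p₂]
        field_simp

lemma ofReal_le_add_of_forall_le_add_mul {X Y μ : ℝ≥0∞} {f : ℝ → ℝ} {c m : ℝ} (hm : 0 < m)
    (hc : ∀ ℓ, 0 < ℓ → c ≤ f ℓ + m * ℓ)
    (hX : ∀ ℓ, 0 < ℓ → μ ≤ ENNReal.ofReal ℓ → ENNReal.ofReal (f ℓ) ≤ X)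
    (hY : ENNReal.ofReal m * μ ≤ Y) :
    ENNReal.ofReal c ≤ X + Y := by
  refine ENNReal.le_of_forall_pos_le_add fun ε hε hXY => ?_
  have hμ : μ ≠ ⊤ := fun h => by
    simp [h, ENNReal.mul_top (ENNReal.ofReal_pos.2 hm).ne'] at hY
    exact hXY.ne (top_unique (hY ▸ le_add_self))
  -- `ℓ = μ + ε / m` rather than `ℓ = μ`, so that `μ = 0` needs no separate treatment
  set ℓ := μ.toReal + ε / m
  have hℓ : 0 < ℓ := add_pos_of_nonneg_of_pos ENNReal.toReal_nonneg (by positivity)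
  have hμℓ : μ ≤ ENNReal.ofReal ℓ := by
    rw [← ENNReal.ofReal_toReal hμ]
    exact ENNReal.ofReal_le_ofReal (le_add_of_nonneg_right (by positivity))
  calc ENNReal.ofReal c ≤ ENNReal.ofReal (f ℓ + m * μ.toReal + ε) := by
        refine ENNReal.ofReal_le_ofReal ((hc ℓ hℓ).trans_eq ?_)
        simp only [ℓ]
        field_simp
        ring
    _ ≤ ENNReal.ofReal (f ℓ) + ENNReal.ofReal m * μ + ε := by
        refine ENNReal.ofReal_add_le.trans (add_le_add (ENNReal.ofReal_add_le.trans ?_) ?_)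
        · rw [ENNReal.ofReal_mul hm.le, ENNReal.ofReal_toReal hμ]
        · simp
    _ ≤ X + Y + ε := by gcongr; exact hX ℓ hℓ hμℓ

lemma sInf_image_pos {α : Type*} [TopologicalSpace α] {K : Set α} {V : α → ℝ}
    (hK : IsCompact K) (hne : K.Nonempty) (hV : ContinuousOn V K) (hpos : ∀ t ∈ K, 0 < V t) :
    0 < sInf (V '' K) := by
  obtain ⟨t, ht, hmin⟩ := (hK.image_of_continuousOn hV).sInf_mem (hne.image V)
  exact hmin ▸ hpos t ht

lemma ofReal_mul_volume_le_lintegral {V v : ℝ → ℝ} (hV : Measurable V) (hv : Measurable v)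
    {S : Set ℝ} {m : ℝ} (hm : ∀ t ∈ S, m ≤ V t) :
    ENNReal.ofReal m * volume {x | v x ∈ S} ≤ ∫⁻ x, ENNReal.ofReal (V (v x)) :=
  calc ENNReal.ofReal m * volume {x | v x ∈ S}
      ≤ ENNReal.ofReal m * volume {x | ENNReal.ofReal m ≤ ENNReal.ofReal (V (v x))} :=
        mul_le_mul_right (measure_mono fun x (hx : v x ∈ S) =>
          ENNReal.ofReal_le_ofReal (hm _ hx)) _
    _ ≤ ∫⁻ x, ENNReal.ofReal (V (v x)) :=
        mul_meas_ge_le_lintegral₀ (hV.comp hv).ennreal_ofReal.aemeasurable _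

lemma Gone_eq (a s D : ℝ) (V v : ℝ → ℝ) :
    Gone a s D V v = ENNReal.ofReal (1 / D) * gag s univ v + ∫⁻ x, ENNReal.ofReal (V (v x)) := by
  simp [Gone]

theorem stmt_10_general (a s D α' β' : ℝ) (V : ℝ → ℝ)
    (ha : a ∈ Set.Ioo (-1 : ℝ) 0) (hs : s = (1 - a) / 2) (hD : 0 < D)
    (hV0 : ∀ t, 0 ≤ V t) (hVc : Continuous V)
    (hVz : ∀ t, V t = 0 ↔ t = α' ∨ t = β')
    (δ : ℝ) (hδ0 : 0 < δ) (hδ : δ < (β' - α') / 2)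
    (mδ : ℝ) (hm : mδ = sInf (V '' Icc (α' + δ) (β' - δ))) :
    0 < mδ ∧
    0 < (2 * s) ^ ((2 * s - 1) / (2 * s)) / (2 * s - 1) *
        ((β' - α' - 2 * δ) ^ 2 / D) ^ (1 / (2 * s)) * mδ ^ ((2 * s - 1) / (2 * s)) ∧
    ∀ v : ℝ → ℝ, Measurable v →
      Tendsto v atBot (nhds α') → Tendsto v atTop (nhds β') →
      ENNReal.ofReal
          ((2 * s) ^ ((2 * s - 1) / (2 * s)) / (2 * s - 1) *
            ((β' - α' - 2 * δ) ^ 2 / D) ^ (1 / (2 * s)) * mδ ^ ((2 * s - 1) / (2 * s))) ≤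
        Gone a s D V v := by
  have h2s : 1 < 2 * s := by rw [hs]; linarith [ha.2]
  have hgap : 0 < β' - α' - 2 * δ := by linarith
  have hVpos : ∀ t ∈ Icc (α' + δ) (β' - δ), 0 < V t := fun t ht =>
    (hV0 t).lt_of_ne fun h => by rcases (hVz t).1 h.symm with rfl | rfl <;> linarith [ht.1, ht.2]
  have hmδ : 0 < mδ :=
    hm ▸ sInf_image_pos isCompact_Icc (nonempty_Icc.2 (by linarith)) hVc.continuousOn hVpos
  refine ⟨hmδ, by positivity, fun v hv hbot htop => ?_⟩
  have hpot := ofReal_mul_volume_le_lintegral hVc.measurable hv fun t ht =>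
    hm ▸ csInf_le (isCompact_Icc.image hVc).bddBelow (mem_image_of_mem V (Ioo_subset_Icc_self ht))
  rw [Gone_eq]
  refine ofReal_le_add_of_forall_le_add_mul hmδ
    (fun ℓ hℓ => amgm_le_div_mul_rpow_add_mul h2s (by positivity) hmδ hℓ) (fun ℓ hℓ hC => ?_) hpot
  have hgag := ofReal_le_gag (s := s) (by linarith) hv (by linarith)
    ((hbot.eventually_lt_const (by linarith)).mono fun _ => le_of_lt)
    ((htop.eventually_const_lt (by linarith)).mono fun _ => le_of_lt) hℓ hC
  rw [show β' - δ - (α' + δ) = β' - α' - 2 * δ by ring] at hgag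
  calc ENNReal.ofReal ((β' - α' - 2 * δ) ^ 2 / D / (2 * s * (2 * s - 1)) * ℓ ^ (1 - 2 * s))
      = ENNReal.ofReal (1 / D) *
          ENNReal.ofReal ((β' - α' - 2 * δ) ^ 2 / (2 * s * (2 * s - 1)) * ℓ ^ (1 - 2 * s)) := by
        rw [← ENNReal.ofReal_mul (by positivity)]
        ring_nf
    _ ≤ ENNReal.ofReal (1 / D) * gag s univ v := by gcongr

theorem stmt_10 (a s D α' β' : ℝ) (V : ℝ → ℝ)
    (ha : a ∈ Set.Ioo (-1 : ℝ) 0) (hs : s = (1 - a) / 2) (hD : 0 < D) (hαβ : α' < β')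
    (hV0 : ∀ t, 0 ≤ V t) (hVc : Continuous V)
    (hVz : ∀ t, V t = 0 ↔ t = α' ∨ t = β')
    (δ : ℝ) (hδ0 : 0 < δ) (hδ : δ < (β' - α') / 2)
    (mδ : ℝ) (hm : mδ = sInf (V '' Icc (α' + δ) (β' - δ))) :
    0 < mδ ∧
    0 < (2 * s) ^ ((2 * s - 1) / (2 * s)) / (2 * s - 1) *
        ((β' - α' - 2 * δ) ^ 2 / D) ^ (1 / (2 * s)) * mδ ^ ((2 * s - 1) / (2 * s)) ∧
    ∀ v : ℝ → ℝ, Measurable v →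
      Tendsto v atBot (nhds α') → Tendsto v atTop (nhds β') →
      ENNReal.ofReal
          ((2 * s) ^ ((2 * s - 1) / (2 * s)) / (2 * s - 1) *
            ((β' - α' - 2 * δ) ^ 2 / D) ^ (1 / (2 * s)) * mδ ^ ((2 * s - 1) / (2 * s))) ≤
        Gone a s D V v :=
  stmt_10_general a s D α' β' V ha hs hD hV0 hVc hVz δ hδ0 hδ mδ hm
end
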